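/- arXiv:1504.08297 — 3 statements merged into one kernel-verified Lean document; each statement's English description precedes it below -/
import Mathlib

section
/- Let E be a finite-dimensional real normed vector space, U ⊆ E an open set, and A : U → (E →L[ℝ] Mₙ(ℝ)) an Mₙ(ℝ)-valued 1-form on U. For a differentiable map γ : U → GLₙ(ℝ) define A^γ(x)(v) := γ(x)⁻¹ A(x)(v) γ(x) + γ(x)⁻¹ (Dγ)(x)(v). Then for any differentiable maps γ, u : U → GLₙ(ℝ), one has (A^γ)^{γ⁻¹u} = A^u, where γ⁻¹u denotes the pointwise product x ↦ γ(x)⁻¹u(x). In other words, if a dressing field u transforms under the gauge transformation γ as u ↦ γ⁻¹u, then the composite (dressed) field A^u is invariant under the gauge transformation by γ. -/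
/-!
Pointwise everything is ring algebra. The derivative of inversion gives
`D(γ⁻¹u) = γ⁻¹ (Du - Dγ γ⁻¹ u)`; inserting this into `(A^γ)^{γ⁻¹u}`, the conjugations by `γ`
cancel and the two `Dγ` terms cancel, leaving `u⁻¹ A u + u⁻¹ Du = A^u`.
-/

open Matrix ContinuousLinearMap

attribute [local instance] Matrix.linftyOpNormedAddCommGroup Matrix.linftyOpNormedRing
  Matrix.linftyOpNormedAlgebra

noncomputable section

variable {E : Type*} [NormedAddCommGroup E] [NormedSpace ℝ E]

/-- The gauge transform `A^γ` of an `Mₙ(ℝ)`-valued 1-form `A` by an invertible-matrix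
valued map `γ`: `A^γ(x)(v) = γ(x)⁻¹ A(x)(v) γ(x) + γ(x)⁻¹ (Dγ)(x)(v)`. -/
def gaugeT {n : ℕ} (A : E → (E →L[ℝ] Matrix (Fin n) (Fin n) ℝ))
    (γ : E → GL (Fin n) ℝ) : E → (E →L[ℝ] Matrix (Fin n) (Fin n) ℝ) :=
  fun x =>
    (ContinuousLinearMap.mul ℝ (Matrix (Fin n) (Fin n) ℝ) (↑(γ x)⁻¹ : Matrix (Fin n) (Fin n) ℝ)).comp
      ((show E →L[ℝ] Matrix (Fin n) (Fin n) ℝ from ((ContinuousLinearMap.mul ℝ (Matrix (Fin n) (Fin n) ℝ)).flip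
          ((γ x : Matrix (Fin n) (Fin n) ℝ))).comp (A x))
        + fderiv ℝ (fun y => (γ y : Matrix (Fin n) (Fin n) ℝ)) x)

def unitGaugeTransform {R : Type*} [Ring R] (g : Rˣ) (a dg : R) : R :=
  ↑g⁻¹ * (a * g + dg)

theorem unitGaugeTransform_inv_mul {R : Type*} [Ring R] (g u : Rˣ) (a dg du : R) :
    unitGaugeTransform (g⁻¹ * u) (unitGaugeTransform g a dg) (↑g⁻¹ * (du - dg * ↑g⁻¹ * u)) =
      unitGaugeTransform u a du := by
  simp only [unitGaugeTransform, _root_.mul_inv_rev, inv_inv, Units.val_mul]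
  simp only [mul_add, mul_sub, add_mul, mul_assoc, Units.mul_inv_cancel_left]
  abel

section

variable {𝕜 F R : Type*} [NontriviallyNormedField 𝕜] [NormedAddCommGroup F] [NormedSpace 𝕜 F]
  [NormedRing R] [HasSummableGeomSeries R] [NormedAlgebra 𝕜 R]

theorem HasFDerivAt.units_inv {γ : F → Rˣ} {γ' : F →L[𝕜] R} {x : F}
    (hγ : HasFDerivAt (fun y => (γ y : R)) γ' x) :
    HasFDerivAt (fun y => (((γ y)⁻¹ : Rˣ) : R)) (-(mulLeftRight 𝕜 R ↑(γ x)⁻¹ ↑(γ x)⁻¹).comp γ') x := by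
  have h := (hasFDerivAt_ringInverse (𝕜 := 𝕜) (γ x)).comp x hγ
  simp only [Function.comp_def, Ring.inverse_unit] at h
  exact h

theorem fderiv_units_inv_mul_apply {γ u : F → Rˣ} {x : F}
    (hγ : DifferentiableAt 𝕜 (fun y => (γ y : R)) x)
    (hu : DifferentiableAt 𝕜 (fun y => (u y : R)) x) (v : F) :
    fderiv 𝕜 (fun y => (((γ y)⁻¹ * u y : Rˣ) : R)) x v =
      ↑(γ x)⁻¹ * (fderiv 𝕜 (fun y => (u y : R)) x v
        - fderiv 𝕜 (fun y => (γ y : R)) x v * ↑(γ x)⁻¹ * u x) := by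
  simp only [Units.val_mul]
  rw [(hγ.hasFDerivAt.units_inv.fun_mul' hu.hasFDerivAt).fderiv]
  simp [mul_sub, mul_assoc, ← sub_eq_add_neg]

end

theorem gaugeT_apply {n : ℕ} (A : E → (E →L[ℝ] Matrix (Fin n) (Fin n) ℝ))
    (γ : E → GL (Fin n) ℝ) (x v : E) :
    gaugeT A γ x v =
      unitGaugeTransform (γ x) (A x v) (fderiv ℝ (fun y => (γ y : Matrix (Fin n) (Fin n) ℝ)) x v) :=
  rfl

theorem stmt_1_general {n : ℕ} (U : Set E)
    (A : E → (E →L[ℝ] Matrix (Fin n) (Fin n) ℝ)) (γ u : E → GL (Fin n) ℝ)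
    (hγ : ∀ x ∈ U, DifferentiableAt ℝ (fun y => (γ y : Matrix (Fin n) (Fin n) ℝ)) x)
    (hu : ∀ x ∈ U, DifferentiableAt ℝ (fun y => (u y : Matrix (Fin n) (Fin n) ℝ)) x) :
    ∀ x ∈ U, ∀ v : E,
      gaugeT (gaugeT A γ) (fun y => (γ y)⁻¹ * u y) x v = gaugeT A u x v := by
  intro x hx v
  rw [gaugeT_apply, gaugeT_apply, gaugeT_apply]
  -- the local `linftyOp` instances and `NormedRing.toNormedAddCommGroup` agree only up to unfolding
  erw [fderiv_units_inv_mul_apply (hγ x hx) (hu x hx)]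
  exact unitGaugeTransform_inv_mul _ _ _ _ _

/-- If a dressing field `u` transforms under the gauge transformation `γ` as `u ↦ γ⁻¹u`,
then the composite (dressed) field `A^u` is invariant under the gauge transformation
by `γ`: `(A^γ)^{γ⁻¹u} = A^u` on `U`. -/
theorem stmt_1 [FiniteDimensional ℝ E] {n : ℕ} (U : Set E) (hU : IsOpen U)
    (A : E → (E →L[ℝ] Matrix (Fin n) (Fin n) ℝ)) (γ u : E → GL (Fin n) ℝ)
    (hγ : ∀ x ∈ U, DifferentiableAt ℝ (fun y => (γ y : Matrix (Fin n) (Fin n) ℝ)) x)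
    (hu : ∀ x ∈ U, DifferentiableAt ℝ (fun y => (u y : Matrix (Fin n) (Fin n) ℝ)) x) :
    ∀ x ∈ U, ∀ v : E,
      gaugeT (gaugeT A γ) (fun y => (γ y)⁻¹ * u y) x v = gaugeT A u x v :=
  stmt_1_general U A γ u hγ hu

end
end

section
/- Let m be a positive integer and η = diag(1, −1, …, −1) ∈ Mₘ(ℝ); for a row vector q ∈ ℝ^{1×m} set q^t := η⁻¹qᵀ and k₁(q) := [[1, q, ½ q q^t],[0, 1ₘ, q^t],[0, 0, 1]] (blocks of sizes (1, m, 1)). Let S ∈ Mₘ(ℝ) satisfy SᵀηS = η (so S is invertible). Then blockdiag(1, S, 1)⁻¹ · k₁(q) · blockdiag(1, S, 1) = k₁(qS). That is, conjugating the dressing field u₁ = k₁(q) by a Lorentz transformation S yields the dressing field with covector q replaced by qS; equivalently, u₁ transforms under the Lorentz group by a gauge-like conjugation. -/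
/-!
A Lorentz matrix has inverse `S⁻¹ = η⁻¹ Sᵀ η`, so `(qS)^t = η⁻¹ Sᵀ qᵀ = S⁻¹ q^t` and hence
`(qS)(qS)^t = q q^t`. Conjugation by `blockdiag(1, S, 1)` multiplies the first row block of
`k₁(q)` by `S` on the right and the middle column block by `S⁻¹` on the left, leaving the
corner entry unchanged; these are exactly the blocks of `k₁(qS)`.
-/

open Matrix

/-- 3×3 block matrix with block sizes (1, m, 1). -/
def B3 {R : Type*} {m : ℕ}
    (a11 : Matrix (Fin 1) (Fin 1) R) (a12 : Matrix (Fin 1) (Fin m) R) (a13 : Matrix (Fin 1) (Fin 1) R)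
    (a21 : Matrix (Fin m) (Fin 1) R) (a22 : Matrix (Fin m) (Fin m) R) (a23 : Matrix (Fin m) (Fin 1) R)
    (a31 : Matrix (Fin 1) (Fin 1) R) (a32 : Matrix (Fin 1) (Fin m) R) (a33 : Matrix (Fin 1) (Fin 1) R) :
    Matrix (Fin 1 ⊕ (Fin m ⊕ Fin 1)) (Fin 1 ⊕ (Fin m ⊕ Fin 1)) R :=
  Matrix.fromBlocks a11 (Matrix.fromCols a12 a13) (Matrix.fromRows a21 a31)
    (Matrix.fromBlocks a22 a23 a32 a33)

/-- The Minkowski matrix `diag(1, −1, …, −1)` of signature `(1, m−1)`. -/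
def Mink (m : ℕ) : Matrix (Fin m) (Fin m) ℝ :=
  Matrix.diagonal fun i => if (i : ℕ) = 0 then 1 else -1

/-- For a row vector `r`, the column vector `r^t := η⁻¹ rᵀ`. -/
noncomputable def rT {m : ℕ} (r : Matrix (Fin 1) (Fin m) ℝ) : Matrix (Fin m) (Fin 1) ℝ :=
  (Mink m)⁻¹ * r.transpose

/-- The special conformal (inversion) group element
`k₁(r) = [[1, r, ½ r r^t],[0, 1ₘ, r^t],[0, 0, 1]]`. -/
noncomputable def k1 {m : ℕ} (r : Matrix (Fin 1) (Fin m) ℝ) :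
    Matrix (Fin 1 ⊕ (Fin m ⊕ Fin 1)) (Fin 1 ⊕ (Fin m ⊕ Fin 1)) ℝ :=
  B3 1 r ((2⁻¹ : ℝ) • (r * rT r)) 0 1 (rT r) 0 0 1

section BlockMatrix

variable {R : Type*} [Semiring R] {m : ℕ}

theorem B3_mul_B3
    (a11 : Matrix (Fin 1) (Fin 1) R) (a12 : Matrix (Fin 1) (Fin m) R) (a13 : Matrix (Fin 1) (Fin 1) R)
    (a21 : Matrix (Fin m) (Fin 1) R) (a22 : Matrix (Fin m) (Fin m) R) (a23 : Matrix (Fin m) (Fin 1) R)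
    (a31 : Matrix (Fin 1) (Fin 1) R) (a32 : Matrix (Fin 1) (Fin m) R) (a33 : Matrix (Fin 1) (Fin 1) R)
    (b11 : Matrix (Fin 1) (Fin 1) R) (b12 : Matrix (Fin 1) (Fin m) R) (b13 : Matrix (Fin 1) (Fin 1) R)
    (b21 : Matrix (Fin m) (Fin 1) R) (b22 : Matrix (Fin m) (Fin m) R) (b23 : Matrix (Fin m) (Fin 1) R)
    (b31 : Matrix (Fin 1) (Fin 1) R) (b32 : Matrix (Fin 1) (Fin m) R) (b33 : Matrix (Fin 1) (Fin 1) R) :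
    B3 a11 a12 a13 a21 a22 a23 a31 a32 a33 * B3 b11 b12 b13 b21 b22 b23 b31 b32 b33 =
      B3 (a11 * b11 + a12 * b21 + a13 * b31) (a11 * b12 + a12 * b22 + a13 * b32)
        (a11 * b13 + a12 * b23 + a13 * b33)
        (a21 * b11 + a22 * b21 + a23 * b31) (a21 * b12 + a22 * b22 + a23 * b32)
        (a21 * b13 + a22 * b23 + a23 * b33)
        (a31 * b11 + a32 * b21 + a33 * b31) (a31 * b12 + a32 * b22 + a33 * b32)
        (a31 * b13 + a32 * b23 + a33 * b33) := by
  ext (i | j | k) (i' | j' | k') <;>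
    simp [B3, Matrix.mul_apply, Fintype.sum_sum_type, Matrix.fromBlocks, Matrix.fromCols,
      add_assoc]

theorem B3_one : (B3 1 0 0 0 1 0 0 0 1 : Matrix (Fin 1 ⊕ (Fin m ⊕ Fin 1)) _ R) = 1 := by
  simp [B3, Matrix.fromBlocks_one]

theorem blockDiag_mul_B3_mul_blockDiag (A B : Matrix (Fin m) (Fin m) R) (r : Matrix (Fin 1) (Fin m) R)
    (c : Matrix (Fin 1) (Fin 1) R) (v : Matrix (Fin m) (Fin 1) R) :
    B3 1 0 0 0 A 0 0 0 1 * B3 1 r c 0 1 v 0 0 1 * B3 1 0 0 0 B 0 0 0 1 =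
      B3 1 (r * B) c 0 (A * B) (A * v) 0 0 1 := by
  simp [B3_mul_B3]

end BlockMatrix

theorem inv_B3_blockDiag {R : Type*} [CommRing R] {m : ℕ} (S : Matrix (Fin m) (Fin m) R) (hS : IsUnit S.det) :
    (B3 1 0 0 0 S 0 0 0 1)⁻¹ = B3 1 0 0 0 S⁻¹ 0 0 0 1 :=
  Matrix.inv_eq_left_inv <| by simp [B3_mul_B3, nonsing_inv_mul S hS, B3_one]

section Isometry

variable {n : Type*} [Fintype n] [DecidableEq n] {K : Type*} [CommRing K]
  {η S : Matrix n n K} (hη : IsUnit η.det) (hS : Sᵀ * η * S = η)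
include hη hS

theorem inv_mul_transpose_mul_mul_of_isometry : η⁻¹ * Sᵀ * η * S = 1 := by
  rw [Matrix.mul_assoc, Matrix.mul_assoc, ← Matrix.mul_assoc Sᵀ, hS, nonsing_inv_mul η hη]

theorem isUnit_det_of_isometry : IsUnit S.det :=
  isUnit_det_of_left_inverse (inv_mul_transpose_mul_mul_of_isometry hη hS)

theorem inv_eq_of_isometry : S⁻¹ = η⁻¹ * Sᵀ * η :=
  Matrix.inv_eq_left_inv (inv_mul_transpose_mul_mul_of_isometry hη hS)

end Isometry

theorem Mink_mul_self (m : ℕ) : Mink m * Mink m = 1 := by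
  rw [Mink, diagonal_mul_diagonal, ← diagonal_one]
  congr 1
  funext i
  split_ifs <;> norm_num

theorem isUnit_det_Mink (m : ℕ) : IsUnit (Mink m).det :=
  isUnit_det_of_right_inverse (Mink_mul_self m)

section Lorentz

variable {m : ℕ} {S : Matrix (Fin m) (Fin m) ℝ} (hS : Sᵀ * Mink m * S = Mink m)
include hS

theorem rT_mul_of_lorentz (q : Matrix (Fin 1) (Fin m) ℝ) : rT (q * S) = S⁻¹ * rT q := by
  rw [inv_eq_of_isometry (isUnit_det_Mink m) hS, rT, rT, transpose_mul, Matrix.mul_assoc,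
    Matrix.mul_assoc, (Mink m).mul_nonsing_inv_cancel_left _ (isUnit_det_Mink m)]

theorem mul_rT_mul_of_lorentz (q : Matrix (Fin 1) (Fin m) ℝ) :
    q * S * rT (q * S) = q * rT q := by
  rw [rT_mul_of_lorentz hS, Matrix.mul_assoc,
    S.mul_nonsing_inv_cancel_left _ (isUnit_det_of_isometry (isUnit_det_Mink m) hS)]

end Lorentz

theorem stmt_6_general (m : ℕ)
    (S : Matrix (Fin m) (Fin m) ℝ) (hS : S.transpose * Mink m * S = Mink m)
    (q : Matrix (Fin 1) (Fin m) ℝ) :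
    (B3 1 0 0 0 S 0 0 0 1)⁻¹ * k1 q * B3 1 0 0 0 S 0 0 0 1 = k1 (q * S) := by
  have hdet : IsUnit S.det := isUnit_det_of_isometry (isUnit_det_Mink m) hS
  rw [inv_B3_blockDiag S hdet, k1, blockDiag_mul_B3_mul_blockDiag, nonsing_inv_mul S hdet, k1,
    mul_rT_mul_of_lorentz hS, rT_mul_of_lorentz hS]

/-- Conjugating the dressing field `u₁ = k₁(q)` by a Lorentz transformation
`blockdiag(1, S, 1)` (with `Sᵀ η S = η`) yields `k₁(qS)`. -/
theorem stmt_6 (m : ℕ) (hm : 0 < m)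
    (S : Matrix (Fin m) (Fin m) ℝ) (hS : S.transpose * Mink m * S = Mink m)
    (q : Matrix (Fin 1) (Fin m) ℝ) :
    (B3 1 0 0 0 S 0 0 0 1)⁻¹ * k1 q * B3 1 0 0 0 S 0 0 0 1 = k1 (q * S) :=
  stmt_6_general m S hS q
end

section
/- Let m be a positive integer and R a commutative ring which is an ℝ-algebra. Let g ∈ Mₘ(R) be symmetric and invertible, ζ ∈ R^{1×m}, z ∈ R invertible, and define W̄ := [[z, zζ, ½ z⁻¹ ζ g⁻¹ ζᵀ],[0, z·1ₘ, z⁻¹ g⁻¹ ζᵀ],[0, 0, z⁻¹]] (blocks of sizes (1, m, 1)). Let C ∈ R^{1×m} and W ∈ Mₘ(R) with Wᵀg = −gW, and set Ω₀ := [[0, C, 0],[0, W, g⁻¹Cᵀ],[0, 0, 0]]. Then W̄⁻¹ · Ω₀ · W̄ = [[0, C − ζW, 0],[0, W, z⁻² g⁻¹ (C − ζW)ᵀ],[0, 0, 0]]. In particular, in the normal (torsion-free, Ricci-null) case, the Weyl tensor block W is invariant under Weyl rescaling, and the Cotton block transforms as C ↦ C − ζW. -/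
open Matrix

/-- Block extractors for a 3×3 block matrix with block sizes (1, m, 1). -/
def blk11 {R : Type*} {m : ℕ} (M : Matrix (Fin 1 ⊕ (Fin m ⊕ Fin 1)) (Fin 1 ⊕ (Fin m ⊕ Fin 1)) R) :
    Matrix (Fin 1) (Fin 1) R := M.submatrix Sum.inl Sum.inl
def blk12 {R : Type*} {m : ℕ} (M : Matrix (Fin 1 ⊕ (Fin m ⊕ Fin 1)) (Fin 1 ⊕ (Fin m ⊕ Fin 1)) R) :
    Matrix (Fin 1) (Fin m) R := M.submatrix Sum.inl (fun j => Sum.inr (Sum.inl j))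
def blk13 {R : Type*} {m : ℕ} (M : Matrix (Fin 1 ⊕ (Fin m ⊕ Fin 1)) (Fin 1 ⊕ (Fin m ⊕ Fin 1)) R) :
    Matrix (Fin 1) (Fin 1) R := M.submatrix Sum.inl (fun j => Sum.inr (Sum.inr j))
def blk21 {R : Type*} {m : ℕ} (M : Matrix (Fin 1 ⊕ (Fin m ⊕ Fin 1)) (Fin 1 ⊕ (Fin m ⊕ Fin 1)) R) :
    Matrix (Fin m) (Fin 1) R := M.submatrix (fun i => Sum.inr (Sum.inl i)) Sum.inl
def blk22 {R : Type*} {m : ℕ} (M : Matrix (Fin 1 ⊕ (Fin m ⊕ Fin 1)) (Fin 1 ⊕ (Fin m ⊕ Fin 1)) R) :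
    Matrix (Fin m) (Fin m) R := M.submatrix (fun i => Sum.inr (Sum.inl i)) (fun j => Sum.inr (Sum.inl j))
def blk23 {R : Type*} {m : ℕ} (M : Matrix (Fin 1 ⊕ (Fin m ⊕ Fin 1)) (Fin 1 ⊕ (Fin m ⊕ Fin 1)) R) :
    Matrix (Fin m) (Fin 1) R := M.submatrix (fun i => Sum.inr (Sum.inl i)) (fun j => Sum.inr (Sum.inr j))
def blk31 {R : Type*} {m : ℕ} (M : Matrix (Fin 1 ⊕ (Fin m ⊕ Fin 1)) (Fin 1 ⊕ (Fin m ⊕ Fin 1)) R) :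
    Matrix (Fin 1) (Fin 1) R := M.submatrix (fun i => Sum.inr (Sum.inr i)) Sum.inl
def blk32 {R : Type*} {m : ℕ} (M : Matrix (Fin 1 ⊕ (Fin m ⊕ Fin 1)) (Fin 1 ⊕ (Fin m ⊕ Fin 1)) R) :
    Matrix (Fin 1) (Fin m) R := M.submatrix (fun i => Sum.inr (Sum.inr i)) (fun j => Sum.inr (Sum.inl j))
def blk33 {R : Type*} {m : ℕ} (M : Matrix (Fin 1 ⊕ (Fin m ⊕ Fin 1)) (Fin 1 ⊕ (Fin m ⊕ Fin 1)) R) :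
    Matrix (Fin 1) (Fin 1) R := M.submatrix (fun i => Sum.inr (Sum.inr i)) (fun j => Sum.inr (Sum.inr j))

/-!
`W̄` intertwines `Ω₀` with the claimed matrix `Ω₀'`, i.e. `Ω₀ W̄ = W̄ Ω₀'`, and `W̄` is invertible
since it is block upper triangular with invertible diagonal blocks `z, z·1ₘ, z⁻¹`. Of the nine block
identities behind `Ω₀ W̄ = W̄ Ω₀'` only two are not immediate. The `g`-skewness of `W` makes
`W g⁻¹` skew, so `g⁻¹ Wᵀ = -W g⁻¹` and the scalar `ζ W g⁻¹ ζᵀ` equals its own negative, hence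
vanishes as `2` is invertible in `R`; and since `g` is symmetric, the `1 × 1` matrices
`C g⁻¹ ζᵀ` and `ζ g⁻¹ Cᵀ` are transposes of each other, hence equal.
-/

section
variable {R : Type*} {m : ℕ}

theorem B3_mul [NonUnitalNonAssocSemiring R]
    (a11 a13 a31 a33 b11 b13 b31 b33 : Matrix (Fin 1) (Fin 1) R)
    (a12 a32 b12 b32 : Matrix (Fin 1) (Fin m) R)
    (a21 a23 b21 b23 : Matrix (Fin m) (Fin 1) R)
    (a22 b22 : Matrix (Fin m) (Fin m) R) :
    B3 a11 a12 a13 a21 a22 a23 a31 a32 a33 * B3 b11 b12 b13 b21 b22 b23 b31 b32 b33 =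
      B3 (a11 * b11 + a12 * b21 + a13 * b31) (a11 * b12 + a12 * b22 + a13 * b32)
        (a11 * b13 + a12 * b23 + a13 * b33)
        (a21 * b11 + a22 * b21 + a23 * b31) (a21 * b12 + a22 * b22 + a23 * b32)
        (a21 * b13 + a22 * b23 + a23 * b33)
        (a31 * b11 + a32 * b21 + a33 * b31) (a31 * b12 + a32 * b22 + a33 * b32)
        (a31 * b13 + a32 * b23 + a33 * b33) := by
  ext (i | i | i) (j | j | j) <;>
    simp [B3, Matrix.mul_apply, Fintype.sum_sum_type, add_assoc]

theorem transpose_eq_self_of_subsingleton {n : Type*} [Subsingleton n] (A : Matrix n n R) :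
    Aᵀ = A := by
  ext i j
  rw [Subsingleton.elim i j, transpose_apply]

variable [CommRing R]

theorem det_B3_of_lower_eq_zero
    (a11 a13 a33 : Matrix (Fin 1) (Fin 1) R) (a12 : Matrix (Fin 1) (Fin m) R)
    (a22 : Matrix (Fin m) (Fin m) R) (a23 : Matrix (Fin m) (Fin 1) R) :
    (B3 a11 a12 a13 0 a22 a23 0 0 a33).det = a11.det * (a22.det * a33.det) := by
  rw [B3, fromRows_zero, det_fromBlocks_zero₂₁, det_fromBlocks_zero₂₁]

theorem mul_mul_transpose_eq_zero_of_transpose_eq_neg [IsAddTorsionFree R] {n : Type*}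
    [Fintype n] (v : Matrix (Fin 1) n R) {A : Matrix n n R} (hA : Aᵀ = -A) :
    v * A * vᵀ = 0 := by
  have hskew : (v * A * vᵀ)ᵀ = -(v * A * vᵀ) := by
    simp [Matrix.transpose_mul, hA, Matrix.mul_assoc]
  rw [transpose_eq_self_of_subsingleton] at hskew
  ext i j
  exact self_eq_neg.mp (congrFun₂ hskew i j)

theorem transpose_mul_inv_eq_neg_of_transpose_mul_eq_neg {n : Type*} [Fintype n] [DecidableEq n]
    {g W : Matrix n n R} (hgsymm : gᵀ = g) (hg : IsUnit g.det) (hW : Wᵀ * g = -(g * W)) :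
    (W * g⁻¹)ᵀ = -(W * g⁻¹) := by
  rw [transpose_mul, transpose_nonsing_inv, hgsymm]
  calc g⁻¹ * Wᵀ = g⁻¹ * (Wᵀ * g) * g⁻¹ := by
        rw [Matrix.mul_assoc, Matrix.mul_assoc, mul_nonsing_inv g hg, Matrix.mul_one]
    _ = -(W * g⁻¹) := by
        rw [hW, Matrix.mul_neg, nonsing_inv_mul_cancel_left g W hg, Matrix.neg_mul]

noncomputable def normalCurvature (g : Matrix (Fin m) (Fin m) R) (C : Matrix (Fin 1) (Fin m) R)
    (W : Matrix (Fin m) (Fin m) R) : Matrix (Fin 1 ⊕ (Fin m ⊕ Fin 1)) (Fin 1 ⊕ (Fin m ⊕ Fin 1)) R :=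
  B3 0 C 0 0 W (g⁻¹ * Cᵀ) 0 0 0

variable [Algebra ℝ R]

/-- `zi` plays the role of `z⁻¹`. -/
noncomputable def weylRescaling (g : Matrix (Fin m) (Fin m) R) (ζ : Matrix (Fin 1) (Fin m) R)
    (z zi : R) : Matrix (Fin 1 ⊕ (Fin m ⊕ Fin 1)) (Fin 1 ⊕ (Fin m ⊕ Fin 1)) R :=
  B3 (z • 1) (z • ζ) ((2⁻¹ : ℝ) • (zi • (ζ * g⁻¹ * ζᵀ)))
    0 (z • (1 : Matrix (Fin m) (Fin m) R)) (zi • (g⁻¹ * ζᵀ)) 0 0 (zi • 1)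

theorem isUnit_det_weylRescaling (g : Matrix (Fin m) (Fin m) R) (ζ : Matrix (Fin 1) (Fin m) R)
    {z zi : R} (hz : z * zi = 1) : IsUnit (weylRescaling g ζ z zi).det := by
  have hzu : IsUnit z := .of_mul_eq_one zi hz
  have hziu : IsUnit zi := .of_mul_eq_one_right z hz
  rw [weylRescaling, det_B3_of_lower_eq_zero]
  simp only [det_smul, det_one, Fintype.card_fin, pow_one, mul_one]
  exact hzu.mul ((hzu.pow m).mul hziu)

theorem normalCurvature_mul_weylRescaling {g : Matrix (Fin m) (Fin m) R} (hgsymm : gᵀ = g)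
    (hg : IsUnit g.det) (ζ : Matrix (Fin 1) (Fin m) R) {z zi : R} (hz : z * zi = 1)
    {C : Matrix (Fin 1) (Fin m) R} {W : Matrix (Fin m) (Fin m) R} (hW : Wᵀ * g = -(g * W)) :
    normalCurvature g C W * weylRescaling g ζ z zi =
      weylRescaling g ζ z zi *
        B3 0 (C - ζ * W) 0 0 W ((zi * zi) • (g⁻¹ * (C - ζ * W)ᵀ)) 0 0 0 := by
  have hK := transpose_mul_inv_eq_neg_of_transpose_mul_eq_neg hgsymm hg hW
  have := IsAddTorsionFree.of_isTorsionFree ℝ R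
  have hζ0 : ζ * (W * g⁻¹ * ζᵀ) = 0 := by
    rw [← Matrix.mul_assoc, mul_mul_transpose_eq_zero_of_transpose_eq_neg ζ hK]
  have hgi : g⁻¹ᵀ = g⁻¹ := by rw [transpose_nonsing_inv, hgsymm]
  have hgW : g⁻¹ * Wᵀ = -(W * g⁻¹) := by rw [← hK, transpose_mul, hgi]
  have hgC : g⁻¹ * (C - ζ * W)ᵀ = g⁻¹ * Cᵀ + W * g⁻¹ * ζᵀ := by
    rw [transpose_sub, transpose_mul, Matrix.mul_sub, ← Matrix.mul_assoc, hgW, Matrix.neg_mul,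
      sub_neg_eq_add]
  have hCζ : C * (g⁻¹ * ζᵀ) = ζ * (g⁻¹ * Cᵀ) := by
    rw [← transpose_eq_self_of_subsingleton (ζ * (g⁻¹ * Cᵀ))]
    simp only [transpose_mul, transpose_transpose, hgi, Matrix.mul_assoc]
  have hzi : zi * zi * z = zi := by rw [mul_assoc, mul_comm zi z, hz, mul_one]
  rw [normalCurvature, weylRescaling, B3_mul, B3_mul, hgC]
  simp only [Matrix.zero_mul, Matrix.mul_zero, Matrix.smul_mul, Matrix.mul_smul,
    Matrix.one_mul, Matrix.mul_one, add_zero, zero_add, smul_zero, smul_smul, hzi]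
  congr 1
  · rw [← smul_add, sub_add_cancel]
  · rw [Matrix.mul_add, hζ0, add_zero, hCζ]
  · rw [smul_add, add_comm, Matrix.mul_assoc]

end

theorem stmt_13_general (m : ℕ) (R : Type*) [CommRing R] [Algebra ℝ R]
    (g : Matrix (Fin m) (Fin m) R) (hgsymm : g.transpose = g) (hg : IsUnit g.det)
    (ζ : Matrix (Fin 1) (Fin m) R) (z zi : R) (hz : z * zi = 1)
    (C : Matrix (Fin 1) (Fin m) R) (W : Matrix (Fin m) (Fin m) R)
    (hW : W.transpose * g = -(g * W)) :
    let Wb := B3 (z • 1) (z • ζ) ((2⁻¹ : ℝ) • (zi • (ζ * g⁻¹ * ζ.transpose)))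
        0 (z • (1 : Matrix (Fin m) (Fin m) R)) (zi • (g⁻¹ * ζ.transpose)) 0 0 (zi • 1);
    let Ω₀ := B3 0 C 0 0 W (g⁻¹ * C.transpose) 0 0 0;
    Wb⁻¹ * Ω₀ * Wb
      = B3 0 (C - ζ * W) 0 0 W ((zi * zi) • (g⁻¹ * (C - ζ * W).transpose)) 0 0 0 := by
  intro Wb Ω₀
  have hintertwine :
      Ω₀ * Wb = Wb * B3 0 (C - ζ * W) 0 0 W ((zi * zi) • (g⁻¹ * (C - ζ * W)ᵀ)) 0 0 0 :=
    normalCurvature_mul_weylRescaling hgsymm hg ζ hz hW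
  rw [Matrix.mul_assoc, hintertwine]
  exact nonsing_inv_mul_cancel_left _ _ (isUnit_det_weylRescaling g ζ hz)

/-- In the normal (torsion-free, Ricci-null) case, the residual Weyl transform of the
dressed curvature `Ω₀ = [[0, C, 0],[0, W, g⁻¹Cᵀ],[0, 0, 0]]` is
`W̄⁻¹ Ω₀ W̄ = [[0, C − ζW, 0],[0, W, z⁻²g⁻¹(C − ζW)ᵀ],[0, 0, 0]]`: the Weyl tensor block
`W` is invariant and the Cotton block transforms as `C ↦ C − ζW`. -/
theorem stmt_13 (m : ℕ) (hm : 0 < m) (R : Type*) [CommRing R] [Algebra ℝ R]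
    (g : Matrix (Fin m) (Fin m) R) (hgsymm : g.transpose = g) (hg : IsUnit g.det)
    (ζ : Matrix (Fin 1) (Fin m) R) (z zi : R) (hz : z * zi = 1)
    (C : Matrix (Fin 1) (Fin m) R) (W : Matrix (Fin m) (Fin m) R)
    (hW : W.transpose * g = -(g * W)) :
    let Wb := B3 (z • 1) (z • ζ) ((2⁻¹ : ℝ) • (zi • (ζ * g⁻¹ * ζ.transpose)))
        0 (z • (1 : Matrix (Fin m) (Fin m) R)) (zi • (g⁻¹ * ζ.transpose)) 0 0 (zi • 1);
    let Ω₀ := B3 0 C 0 0 W (g⁻¹ * C.transpose) 0 0 0;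
    Wb⁻¹ * Ω₀ * Wb
      = B3 0 (C - ζ * W) 0 0 W ((zi * zi) • (g⁻¹ * (C - ζ * W).transpose)) 0 0 0 :=
  stmt_13_general m R g hgsymm hg ζ z zi hz C W hW
end
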